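/- Exact one-step drift of rooted subgraph counts under Glauber dynamics: for every graph X on [n], every edge e of K_n, and every graph G with edge set E(G), if X(1) denotes the state after one step of the Glauber dynamics started from X, then E[N_G(X(1), e) − N_G(X, e)] = C(n,2)^{−1}·[ −(|E(G)|−1)·N_G(X,e) + Σ_{e'≠e} N_G(X, e, e')·exp(∂_{e'}H(X))/(1+exp(∂_{e'}H(X))) ], where the sum is over edges e' of K_n distinct from e. -/

import Mathlib

open Finset

open scoped Classical

noncomputable section

/-- The set of edges of the complete graph `K_n` on vertex set `[n] = Fin n`:
unordered pairs of distinct vertices. -/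
abbrev EdgeK (n : ℕ) : Type := {e : Sym2 (Fin n) // ¬ e.IsDiag}

/-- A graph on `[n]`, identified with an element `X ∈ {0,1}^{E(K_n)}`. -/
abbrev Config (n : ℕ) : Type := EdgeK n → Bool

/-- The image of an edge under an injection of vertex sets. -/
def mapEdge {m n : ℕ} (v : Fin m ↪ Fin n) (a : EdgeK m) : EdgeK n :=
  ⟨a.1.map v, fun h => a.2 ((Sym2.isDiag_map v.injective).mp h)⟩

/-- The complete graph `K_n` as a configuration. -/
def fullConfig (n : ℕ) : Config n := fun _ => true

/-- `X ∪ {e}`. -/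
def addEdge {n : ℕ} (X : Config n) (e : EdgeK n) : Config n :=
  fun f => if f = e then true else X f

/-- `X_{e+}` (for `b = true`), resp. `X_{e-}` (for `b = false`). -/
def setEdge {n : ℕ} (X : Config n) (e : EdgeK n) (b : Bool) : Config n :=
  fun f => if f = e then b else X f

/-- `N_G(X)`: the number of tuples of `m` distinct vertices of `[n]` such that every
edge of the pattern graph `G` (a graph on `m` labelled vertices) is mapped to an edge of `X`. -/
def copyCount {n m : ℕ} (X : Config n) (G : Finset (EdgeK m)) : ℕ :=
  (univ.filter fun v : Fin m ↪ Fin n => ∀ a ∈ G, X (mapEdge v a) = true).card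

/-- `N_G(X, e)`: the number of such tuples for `X ∪ {e}` which moreover use the edge `e`. -/
def rootedCount {n m : ℕ} (X : Config n) (G : Finset (EdgeK m)) (e : EdgeK n) : ℕ :=
  (univ.filter fun v : Fin m ↪ Fin n =>
    (∃ a ∈ G, mapEdge v a = e) ∧ ∀ a ∈ G, addEdge X e (mapEdge v a) = true).card

/-- `N_G(X, e, e')`: the number of such tuples for `X ∪ {e, e'}` which use both `e` and `e'`. -/
def rooted2Count {n m : ℕ} (X : Config n) (G : Finset (EdgeK m)) (e e' : EdgeK n) : ℕ :=
  (univ.filter fun v : Fin m ↪ Fin n =>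
    (∃ a ∈ G, mapEdge v a = e) ∧ (∃ a ∈ G, mapEdge v a = e') ∧
      ∀ a ∈ G, addEdge (addEdge X e) e' (mapEdge v a) = true).card

/-- The number of edges of the graph `X`. -/
def edgeCount {n : ℕ} (X : Config n) : ℕ := (univ.filter fun e => X e = true).card

/-- Hamming distance between two graphs: the number of edges of disagreement. -/
def hamDist {n : ℕ} (X Y : Config n) : ℕ := (univ.filter fun f => X f ≠ Y f).card

/-- The Hamiltonian `H(X) = ∑ i, β i * N_{G_i}(X) / n^(|V_i| - 2)`. -/
def ergmH {s : ℕ} (V : Fin s → ℕ) (Pt : ∀ i, Finset (EdgeK (V i))) (β : Fin s → ℝ)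
    (n : ℕ) (X : Config n) : ℝ :=
  ∑ i, β i * (copyCount X (Pt i) : ℝ) / (n : ℝ) ^ (V i - 2)

/-- The Gibbs measure `p_n(X) = exp(H(X)) / Z_n`. -/
def gibbs {s : ℕ} (V : Fin s → ℕ) (Pt : ∀ i, Finset (EdgeK (V i))) (β : Fin s → ℝ)
    (n : ℕ) (X : Config n) : ℝ :=
  Real.exp (ergmH V Pt β n X) / ∑ Y : Config n, Real.exp (ergmH V Pt β n Y)

/-- `∂_e H(X) = H(X_{e+}) - H(X_{e-})`. -/
def dH {s : ℕ} (V : Fin s → ℕ) (Pt : ∀ i, Finset (EdgeK (V i))) (β : Fin s → ℝ)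
    (n : ℕ) (X : Config n) (e : EdgeK n) : ℝ :=
  ergmH V Pt β n (setEdge X e true) - ergmH V Pt β n (setEdge X e false)

/-- The transition kernel of the Glauber dynamics: a uniformly random edge `e` of `K_n` is
chosen and set present with probability `exp(∂_e H(X)) /(1 + exp(∂_e H(X)))`, absent
otherwise. -/
def glauber {s : ℕ} (V : Fin s → ℕ) (Pt : ∀ i, Finset (EdgeK (V i))) (β : Fin s → ℝ)
    (n : ℕ) (X Y : Config n) : ℝ :=
  ((n.choose 2 : ℝ))⁻¹ * ∑ e : EdgeK n,
    ((if Y = setEdge X e true then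
        Real.exp (dH V Pt β n X e) / (1 + Real.exp (dH V Pt β n X e)) else 0)
      + (if Y = setEdge X e false then 1 / (1 + Real.exp (dH V Pt β n X e)) else 0))

/-- The `t`-step distribution of the Markov chain with one-step kernel `K`,
started from a given state. -/
def kernelStep {n : ℕ} (K : Config n → Config n → ℝ) : ℕ → Config n → Config n → ℝ
  | 0 => fun x y => if y = x then 1 else 0
  | (t+1) => fun x y => ∑ z, kernelStep K t x z * K z y

/-- Total variation distance between two (signed) distributions on `Config n`. -/
def tvDist {n : ℕ} (μ ν : Config n → ℝ) : ℝ := (∑ Y, |μ Y - ν Y|) / 2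

/-- `mixes K π t` says that after `t` steps the chain with kernel `K` is within total
variation distance `e⁻¹` of `π` from every starting state. -/
def mixes {n : ℕ} (K : Config n → Config n → ℝ) (π : Config n → ℝ) (t : ℕ) : Prop :=
  ∀ x, tvDist (kernelStep K t x) π ≤ Real.exp (-1)

/-- The mixing time: the least `t` such that from every starting state the chain is within
total variation distance `e⁻¹` of `π`. -/
def mixingTime {n : ℕ} (K : Config n → Config n → ℝ) (π : Config n → ℝ) : ℕ :=
  sInf {t | mixes K π t}

/-- `Ψ(p) = ∑ i, 2 β_i |E_i| p^(|E_i| - 1)`. -/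
def PsiF {s : ℕ} {V : Fin s → ℕ} (Pt : ∀ i, Finset (EdgeK (V i))) (β : Fin s → ℝ)
    (p : ℝ) : ℝ :=
  ∑ i, 2 * β i * ((Pt i).card : ℝ) * p ^ ((Pt i).card - 1)

/-- `φ(p) = exp(Ψ(p)) / (1 + exp(Ψ(p)))`. -/
def phiF {s : ℕ} {V : Fin s → ℕ} (Pt : ∀ i, Finset (EdgeK (V i))) (β : Fin s → ℝ)
    (p : ℝ) : ℝ :=
  Real.exp (PsiF Pt β p) / (1 + Real.exp (PsiF Pt β p))

/-- High temperature phase: `φ(p) = p` has a unique solution `p*` (in `[0,1]`), which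
moreover satisfies `φ'(p*) < 1`. -/
def HighTemp {s : ℕ} {V : Fin s → ℕ} (Pt : ∀ i, Finset (EdgeK (V i))) (β : Fin s → ℝ)
    (pstar : ℝ) : Prop :=
  pstar ∈ Set.Icc (0:ℝ) 1 ∧ phiF Pt β pstar = pstar ∧
    (∀ q ∈ Set.Icc (0:ℝ) 1, phiF Pt β q = q → q = pstar) ∧
    deriv (phiF Pt β) pstar < 1

/-- Low temperature phase: `φ(p) = p` has at least two solutions `p` with `φ'(p) < 1`. -/
def LowTemp {s : ℕ} {V : Fin s → ℕ} (Pt : ∀ i, Finset (EdgeK (V i))) (β : Fin s → ℝ) : Prop :=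
  ∃ p₁ p₂ : ℝ, p₁ ∈ Set.Icc (0:ℝ) 1 ∧ p₂ ∈ Set.Icc (0:ℝ) 1 ∧ p₁ ≠ p₂ ∧
    phiF Pt β p₁ = p₁ ∧ phiF Pt β p₂ = p₂ ∧
    deriv (phiF Pt β) p₁ < 1 ∧ deriv (phiF Pt β) p₂ < 1

/-- `r_G(X, e) = (N_G(X,e) / (2 |E(G)| n^(|V(G)|-2)))^(1/(|E(G)|-1))`. -/
def rG {n m : ℕ} (X : Config n) (G : Finset (EdgeK m)) (e : EdgeK n) : ℝ :=
  ((rootedCount X G e : ℝ) / (2 * (G.card : ℝ) * (n : ℝ) ^ (m - 2))) ^ (((G.card : ℝ) - 1)⁻¹)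

/-- The set of values `r_G(X,e)` over all edges `e` of `K_n` and all graphs `G` on at
most `L` vertices with at least two edges. -/
def rSet (L n : ℕ) (X : Config n) : Set ℝ :=
  {r | ∃ m, m ≤ L ∧ ∃ G : Finset (EdgeK m), 2 ≤ G.card ∧ ∃ e : EdgeK n, r = rG X G e}

/-- `r̄(X)`: the maximum of `r_G(X,e)` over all edges `e` of `K_n` and all graphs `G` on
at most `L` vertices with at least two edges. -/
def rbar (L n : ℕ) (X : Config n) : ℝ := sSup (rSet L n X)

/-- `r_min(X)`: the corresponding minimum. -/
def rmin (L n : ℕ) (X : Config n) : ℝ := sInf (rSet L n X)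

/-- The cycle `C_l` on `l` labelled vertices, as a pattern graph. -/
def cyclePattern (l : ℕ) [NeZero l] : Finset (EdgeK l) :=
  univ.filter fun e => ∃ i : Fin l, e.1 = s(i, i + 1)

/-- The probability of a length-`T` trajectory `w` for the chain with kernel `K`
started at `x`. -/
def trajProb {n T : ℕ} (K : Config n → Config n → ℝ) (x : Config n)
    (w : Fin (T+1) → Config n) : ℝ :=
  (if w 0 = x then 1 else 0) * ∏ i : Fin T, K (w i.castSucc) (w i.succ)

/-- Two edges of `K_n` share a vertex. -/
def sharesVertex {n : ℕ} (e e' : EdgeK n) : Prop := ∃ v, v ∈ e.1 ∧ v ∈ e'.1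

end

/-!
Resampling an edge `e' ≠ e` only affects the rooted copies of `G` at `e` that use `e'`:
removing `e'` destroys the copies present in `X ∪ {e}` that use it, and inserting `e'`
creates exactly the `N_G(X, e, e')` copies of `X ∪ {e, e'}` using it. Resampling `e` itself
changes nothing. Summing the losses over all `e' ≠ e` counts each rooted copy once for each
of its `|E(G)| - 1` edges other than `e`.
-/

open Finset

section RootedCopies

variable {n m : ℕ}

lemma mapEdge_injective (v : Fin m ↪ Fin n) : Function.Injective (mapEdge v) := fun _ _ h =>
  Subtype.ext (Sym2.map.injective v.injective (congrArg Subtype.val h))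

lemma addEdge_setEdge_of_ne (X : Config n) (b : Bool) {e e' f : EdgeK n} (hf : f ≠ e') :
    addEdge (setEdge X e' b) e f = addEdge X e f := by
  simp [addEdge, setEdge, hf]

lemma addEdge_setEdge_self (X : Config n) (e : EdgeK n) (b : Bool) :
    addEdge (setEdge X e b) e = addEdge X e := by
  funext f
  by_cases h : f = e <;> simp [addEdge, setEdge, h]

lemma addEdge_setEdge_true (X : Config n) (e e' : EdgeK n) :
    addEdge (setEdge X e' true) e = addEdge (addEdge X e) e' := by
  funext f
  by_cases h : f = e <;> by_cases h' : f = e' <;> simp [addEdge, setEdge, h, h']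

noncomputable def rootedCopies (X : Config n) (G : Finset (EdgeK m)) (e : EdgeK n) :
    Finset (Fin m ↪ Fin n) :=
  univ.filter fun v => (∃ a ∈ G, mapEdge v a = e) ∧ ∀ a ∈ G, addEdge X e (mapEdge v a) = true

lemma card_rootedCopies (X : Config n) (G : Finset (EdgeK m)) (e : EdgeK n) :
    #(rootedCopies X G e) = rootedCount X G e := rfl

lemma rootedCount_setEdge_self (X : Config n) (G : Finset (EdgeK m)) (e : EdgeK n) (b : Bool) :
    rootedCount (setEdge X e b) G e = rootedCount X G e := by
  rw [rootedCount, rootedCount, addEdge_setEdge_self]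

lemma rootedCopies_setEdge_filter_not_uses (X : Config n) (G : Finset (EdgeK m))
    (e e' : EdgeK n) (b : Bool) :
    (rootedCopies (setEdge X e' b) G e).filter (fun v => ¬ ∃ a ∈ G, mapEdge v a = e') =
      (rootedCopies X G e).filter (fun v => ¬ ∃ a ∈ G, mapEdge v a = e') := by
  ext v
  simp only [rootedCopies, mem_filter, mem_univ, true_and, and_congr_left_iff, and_congr_right_iff]
  intro hv _
  exact forall₂_congr fun a ha => by
    rw [addEdge_setEdge_of_ne X b fun h => hv ⟨a, ha, h⟩]

lemma card_rootedCopies_setEdge_true_filter_uses (X : Config n) (G : Finset (EdgeK m))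
    (e e' : EdgeK n) :
    #((rootedCopies (setEdge X e' true) G e).filter fun v => ∃ a ∈ G, mapEdge v a = e') =
      rooted2Count X G e e' := by
  rw [rootedCopies, filter_filter, addEdge_setEdge_true, rooted2Count]
  congr 1
  exact filter_congr fun v _ => by tauto

lemma rootedCopies_setEdge_false_filter_uses (X : Config n) (G : Finset (EdgeK m))
    {e e' : EdgeK n} (h : e' ≠ e) :
    (rootedCopies (setEdge X e' false) G e).filter (fun v => ∃ a ∈ G, mapEdge v a = e') = ∅ := by
  refine filter_false_of_mem fun v hv ⟨a, ha, hva⟩ => ?_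
  have := ((mem_filter.mp hv).2.2 a ha)
  simp [hva, addEdge, setEdge, h] at this

lemma rootedCount_setEdge_true (X : Config n) (G : Finset (EdgeK m)) {e e' : EdgeK n}
    (h : e' ≠ e) :
    rootedCount (setEdge X e' true) G e =
      rooted2Count X G e e' + rootedCount (setEdge X e' false) G e := by
  rw [← card_rootedCopies, ← card_rootedCopies,
    ← card_filter_add_card_filter_not (fun v => ∃ a ∈ G, mapEdge v a = e'),
    ← card_filter_add_card_filter_not (s := rootedCopies (setEdge X e' false) G e)
      (fun v => ∃ a ∈ G, mapEdge v a = e'),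
    card_rootedCopies_setEdge_true_filter_uses, rootedCopies_setEdge_false_filter_uses X G h,
    rootedCopies_setEdge_filter_not_uses, rootedCopies_setEdge_filter_not_uses,
    card_empty, zero_add]

lemma rootedCount_eq_setEdge_false_add (X : Config n) (G : Finset (EdgeK m)) {e e' : EdgeK n}
    (h : e' ≠ e) :
    rootedCount X G e = rootedCount (setEdge X e' false) G e +
      #((rootedCopies X G e).filter fun v => ∃ a ∈ G, mapEdge v a = e') := by
  rw [← card_rootedCopies, ← card_rootedCopies,
    ← card_filter_add_card_filter_not (s := rootedCopies X G e)
      (fun v => ∃ a ∈ G, mapEdge v a = e'),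
    ← card_filter_add_card_filter_not (s := rootedCopies (setEdge X e' false) G e)
      (fun v => ∃ a ∈ G, mapEdge v a = e'),
    rootedCopies_setEdge_false_filter_uses X G h, rootedCopies_setEdge_filter_not_uses,
    card_empty, zero_add, add_comm]

lemma sum_card_rootedCopies_filter_uses (X : Config n) (G : Finset (EdgeK m)) (e : EdgeK n) :
    ∑ e', #((rootedCopies X G e).filter fun v => ∃ a ∈ G, mapEdge v a = e') =
      #G * rootedCount X G e := by
  have hcopy : ∀ v : Fin m ↪ Fin n, #(univ.filter fun e' => ∃ a ∈ G, mapEdge v a = e') = #G :=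
    fun v => by
      rw [← card_image_of_injective G (mapEdge_injective v)]
      congr 1
      ext f
      simp
  simp_rw [card_filter]
  rw [sum_comm]
  simp_rw [← card_filter, hcopy, sum_const, smul_eq_mul, card_rootedCopies, mul_comm]

lemma rootedCopies_filter_uses_self (X : Config n) (G : Finset (EdgeK m)) (e : EdgeK n) :
    (rootedCopies X G e).filter (fun v => ∃ a ∈ G, mapEdge v a = e) = rootedCopies X G e :=
  filter_true_of_mem fun _ hv => (mem_filter.mp hv).2.1

end RootedCopies

section Glauber

variable {s : ℕ} (V : Fin s → ℕ) (Pt : ∀ i, Finset (EdgeK (V i))) (β : Fin s → ℝ) {n : ℕ}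

lemma sum_glauber_mul_sub (X : Config n) (f : Config n → ℝ) :
    ∑ Y, glauber V Pt β n X Y * (f Y - f X) = (n.choose 2 : ℝ)⁻¹ * ∑ e',
      (Real.exp (dH V Pt β n X e') / (1 + Real.exp (dH V Pt β n X e')) *
          (f (setEdge X e' true) - f (setEdge X e' false)) +
        (f (setEdge X e' false) - f X)) := by
  simp only [glauber, mul_assoc, ← mul_sum]
  congr 1
  simp_rw [sum_mul]
  rw [sum_comm]
  refine sum_congr rfl fun e' _ => ?_
  simp only [add_mul, ite_mul, zero_mul, sum_add_distrib, sum_ite_eq', mem_univ, if_true]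
  have hpos : 0 < 1 + Real.exp (dH V Pt β n X e') := by positivity
  field_simp
  ring

end Glauber

/-- **Exact one-step drift of rooted subgraph counts under the Glauber dynamics.**
`E[N_G(X(1),e) - N_G(X,e)] = C(n,2)⁻¹·[-(|E(G)|-1)·N_G(X,e) +
Σ_{e'≠e} N_G(X,e,e')·exp(∂_{e'}H(X))/(1+exp(∂_{e'}H(X)))]`. -/
theorem glauber_drift_identity
    {s : ℕ} (V : Fin s → ℕ) (Pt : ∀ i, Finset (EdgeK (V i))) (β : Fin s → ℝ)
    {n m : ℕ} (X : Config n) (e : EdgeK n) (G : Finset (EdgeK m)) :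
    ∑ Y : Config n,
        glauber V Pt β n X Y * ((rootedCount Y G e : ℝ) - (rootedCount X G e : ℝ)) =
      (n.choose 2 : ℝ)⁻¹ *
        (-(((G.card : ℝ) - 1) * (rootedCount X G e : ℝ)) +
          ∑ e' ∈ univ.filter (fun e' : EdgeK n => e' ≠ e),
            (rooted2Count X G e e' : ℝ) *
              (Real.exp (dH V Pt β n X e') / (1 + Real.exp (dH V Pt β n X e')))) := by
  set uses := fun e' => #((rootedCopies X G e).filter fun v => ∃ a ∈ G, mapEdge v a = e')
  have hterm : ∀ e' ∈ univ.erase e,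
      Real.exp (dH V Pt β n X e') / (1 + Real.exp (dH V Pt β n X e')) *
          ((rootedCount (setEdge X e' true) G e : ℝ) - rootedCount (setEdge X e' false) G e) +
        ((rootedCount (setEdge X e' false) G e : ℝ) - rootedCount X G e) =
      rooted2Count X G e e' * (Real.exp (dH V Pt β n X e') / (1 + Real.exp (dH V Pt β n X e')))
        - uses e' := fun e' he' => by
    have h := ne_of_mem_erase he'
    rw [rootedCount_setEdge_true X G h, rootedCount_eq_setEdge_false_add X G h]
    push_cast
    ring
  have huses : ∑ e' ∈ univ.erase e, (uses e' : ℝ) = (#G - 1) * rootedCount X G e := by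
    have htotal := congrArg (Nat.cast (R := ℝ)) (sum_card_rootedCopies_filter_uses X G e)
    rw [← add_sum_erase _ _ (mem_univ e)] at htotal
    simp only [uses, rootedCopies_filter_uses_self, card_rootedCopies] at htotal ⊢
    push_cast at htotal
    linarith
  rw [sum_glauber_mul_sub, ← add_sum_erase _ _ (mem_univ e), rootedCount_setEdge_self,
    rootedCount_setEdge_self, sum_congr rfl hterm, sum_sub_distrib, huses, filter_ne']
  ring
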